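/- arXiv:1310.3656 — 6 statements merged into one kernel-verified Lean document; each statement's English description precedes it below -/
import Mathlib

section
/- The Kleisli composition for the LTS monad is associative and unital: for any f : X → 𝒫(Σ_τ × Y), g : Y → 𝒫(Σ_τ × Z) and h : Z → 𝒫(Σ_τ × W) one has h·(g·f) = (h·g)·f, e_Y·f = f, and g·e_Y = g. -/
-- Labels: `none` is the silent label τ, `some a` is a visible letter of Σ.

/-- Kleisli composition for the LTS monad `𝒫(Σ_τ × Id)`:
`(g·f)(x) = {(σ,z) | ∃ y, ((σ,y) ∈ f(x) ∧ (τ,z) ∈ g(y)) ∨ ((τ,y) ∈ f(x) ∧ (σ,z) ∈ g(y))}`. -/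
def kcomp {A X Y Z : Type*} (g : Y → Set (Option A × Z)) (f : X → Set (Option A × Y)) :
    X → Set (Option A × Z) :=
  fun x => {p | ∃ y, ((p.1, y) ∈ f x ∧ ((none : Option A), p.2) ∈ g y) ∨
                     (((none : Option A), y) ∈ f x ∧ (p.1, p.2) ∈ g y)}

/-- The unit of the LTS monad: `e_X(x) = {(τ,x)}`. -/
def kunit {A : Type*} (X : Type*) : X → Set (Option A × X) :=
  fun x => {((none : Option A), x)}

/-!
Both bracketings of `h·g·f` describe the same three-step transitions `x → y → z → w` in
which at most one step carries the visible label and all others are silent. The unit laws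
hold because a silent self-loop contributes nothing to a path.
-/

def kcomp₃ {A X Y Z W : Type*} (h : Z → Set (Option A × W)) (g : Y → Set (Option A × Z))
    (f : X → Set (Option A × Y)) : X → Set (Option A × W) :=
  fun x => {p | ∃ y z,
    ((p.1, y) ∈ f x ∧ ((none : Option A), z) ∈ g y ∧ ((none : Option A), p.2) ∈ h z) ∨
    (((none : Option A), y) ∈ f x ∧ (p.1, z) ∈ g y ∧ ((none : Option A), p.2) ∈ h z) ∨
    (((none : Option A), y) ∈ f x ∧ ((none : Option A), z) ∈ g y ∧ (p.1, p.2) ∈ h z)}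

section

variable {A X Y Z W : Type*}

theorem kcomp_kcomp_right_eq_kcomp₃ (f : X → Set (Option A × Y)) (g : Y → Set (Option A × Z))
    (h : Z → Set (Option A × W)) : kcomp h (kcomp g f) = kcomp₃ h g f := by
  funext x
  ext ⟨σ, w⟩
  simp only [kcomp, kcomp₃, Set.mem_ofPred_eq]
  constructor
  · rintro ⟨z, ⟨⟨y, ⟨hf, hg⟩ | ⟨hf, hg⟩⟩, hh⟩ | ⟨⟨y, ⟨hf, hg⟩ | ⟨hf, hg⟩⟩, hh⟩⟩
    · exact ⟨y, z, .inl ⟨hf, hg, hh⟩⟩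
    · exact ⟨y, z, .inr (.inl ⟨hf, hg, hh⟩)⟩
    · exact ⟨y, z, .inr (.inr ⟨hf, hg, hh⟩)⟩
    · exact ⟨y, z, .inr (.inr ⟨hf, hg, hh⟩)⟩
  · rintro ⟨y, z, ⟨hf, hg, hh⟩ | ⟨hf, hg, hh⟩ | ⟨hf, hg, hh⟩⟩
    · exact ⟨z, .inl ⟨⟨y, .inl ⟨hf, hg⟩⟩, hh⟩⟩
    · exact ⟨z, .inl ⟨⟨y, .inr ⟨hf, hg⟩⟩, hh⟩⟩
    · exact ⟨z, .inr ⟨⟨y, .inl ⟨hf, hg⟩⟩, hh⟩⟩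

theorem kcomp_kcomp_left_eq_kcomp₃ (f : X → Set (Option A × Y)) (g : Y → Set (Option A × Z))
    (h : Z → Set (Option A × W)) : kcomp (kcomp h g) f = kcomp₃ h g f := by
  funext x
  ext ⟨σ, w⟩
  simp only [kcomp, kcomp₃, Set.mem_ofPred_eq]
  constructor
  · rintro ⟨y, ⟨hf, z, ⟨hg, hh⟩ | ⟨hg, hh⟩⟩ | ⟨hf, z, ⟨hg, hh⟩ | ⟨hg, hh⟩⟩⟩
    · exact ⟨y, z, .inl ⟨hf, hg, hh⟩⟩
    · exact ⟨y, z, .inl ⟨hf, hg, hh⟩⟩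
    · exact ⟨y, z, .inr (.inl ⟨hf, hg, hh⟩)⟩
    · exact ⟨y, z, .inr (.inr ⟨hf, hg, hh⟩)⟩
  · rintro ⟨y, z, ⟨hf, hg, hh⟩ | ⟨hf, hg, hh⟩ | ⟨hf, hg, hh⟩⟩
    · exact ⟨y, .inl ⟨hf, z, .inl ⟨hg, hh⟩⟩⟩
    · exact ⟨y, .inr ⟨hf, z, .inl ⟨hg, hh⟩⟩⟩
    · exact ⟨y, .inr ⟨hf, z, .inr ⟨hg, hh⟩⟩⟩

theorem kcomp_assoc (f : X → Set (Option A × Y)) (g : Y → Set (Option A × Z))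
    (h : Z → Set (Option A × W)) : kcomp h (kcomp g f) = kcomp (kcomp h g) f := by
  rw [kcomp_kcomp_right_eq_kcomp₃, kcomp_kcomp_left_eq_kcomp₃]

theorem kunit_kcomp (f : X → Set (Option A × Y)) : kcomp (kunit Y) f = f := by
  funext x
  ext ⟨σ, y⟩
  simp only [kcomp, kunit, Set.mem_ofPred_eq, Set.mem_singleton_iff, Prod.mk.injEq]
  constructor
  · rintro ⟨y', ⟨hf, -, rfl⟩ | ⟨hf, rfl, rfl⟩⟩ <;> exact hf
  · exact fun hf => ⟨y, .inl ⟨hf, trivial, rfl⟩⟩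

theorem kcomp_kunit (g : Y → Set (Option A × Z)) : kcomp g (kunit Y) = g := by
  funext y
  ext ⟨σ, z⟩
  simp only [kcomp, kunit, Set.mem_ofPred_eq, Set.mem_singleton_iff, Prod.mk.injEq]
  constructor
  · rintro ⟨y', ⟨⟨rfl, rfl⟩, hg⟩ | ⟨⟨-, rfl⟩, hg⟩⟩ <;> exact hg
  · exact fun hg => ⟨y, .inr ⟨⟨trivial, rfl⟩, hg⟩⟩

end

/-- The Kleisli composition for the LTS monad is associative and unital. -/
theorem lts_kleisli_assoc_and_unital {A X Y Z W : Type*}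
    (f : X → Set (Option A × Y)) (g : Y → Set (Option A × Z)) (h : Z → Set (Option A × W)) :
    kcomp h (kcomp g f) = kcomp (kcomp h g) f ∧
    kcomp (kunit Y) f = f ∧
    kcomp g (kunit Y) = g :=
  ⟨kcomp_assoc f g h, kunit_kcomp f, kcomp_kunit g⟩
end

section
/- Let M be a monoid with a partial order making multiplication monotone in each argument, which is also a join-semilattice, and let (·)* : M → M be a saturation operator (for each α: 1 ≤ α*, α ≤ α*, α*·α* ≤ α*, and α* ≤ β whenever 1 ≤ β, α ≤ β, β·β ≤ β) that additionally satisfies: for all f, α, β ∈ M, f·α ≤ β·f implies f·α* ≤ β*·f, and f·α ≥ β·f implies f·α* ≥ β*·f. Then for every α ∈ M, α* is the least fixed point of the map x ↦ 1 ⊔ x·α; that is, α* = 1 ⊔ α*·α, and α* ≤ γ for every γ ∈ M with γ = 1 ⊔ γ·α. -/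
/-!
The simulation law with `β = 1` turns `γ·α ≤ γ` into `γ·α* ≤ 1*·γ = γ` (minimality gives `1* = 1`),
so every `γ ≥ 1` with `γ·α ≤ γ` satisfies `α* = 1·α* ≤ γ·α* ≤ γ`. Since `1 ⊔ α*·α ≤ α*`, the element
`1 ⊔ α*·α` is such a `γ`, which forces equality.
-/

section Preorder

variable {M : Type*} [Monoid M] [Preorder M] {s : M → M}

theorem saturation_one_le_one (least : ∀ α β : M, 1 ≤ β → α ≤ β → β * β ≤ β → s α ≤ β) :
    s 1 ≤ 1 :=
  least 1 1 le_rfl le_rfl (mul_one 1).le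

theorem mul_saturation_le_of_mul_le [MulRightMono M]
    (least : ∀ α β : M, 1 ≤ β → α ≤ β → β * β ≤ β → s α ≤ β)
    (sim : ∀ f α β : M, f * α ≤ β * f → f * s α ≤ s β * f) {α γ : M} (h : γ * α ≤ γ) :
    γ * s α ≤ γ :=
  calc γ * s α ≤ s 1 * γ := sim γ α 1 (by rwa [one_mul])
    _ ≤ 1 * γ := mul_le_mul_left (saturation_one_le_one least) γ
    _ = γ := one_mul γ

theorem saturation_le_of_one_le_of_mul_le [MulRightMono M]
    (least : ∀ α β : M, 1 ≤ β → α ≤ β → β * β ≤ β → s α ≤ β)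
    (sim : ∀ f α β : M, f * α ≤ β * f → f * s α ≤ s β * f) {α γ : M} (hγ : 1 ≤ γ)
    (h : γ * α ≤ γ) : s α ≤ γ :=
  calc s α = 1 * s α := (one_mul _).symm
    _ ≤ γ * s α := mul_le_mul_left hγ _
    _ ≤ γ := mul_saturation_le_of_mul_le least sim h

end Preorder

theorem one_sup_saturation_mul_le {M : Type*} [Monoid M] [SemilatticeSup M] [MulLeftMono M]
    {s : M → M} (one_le : ∀ α : M, 1 ≤ s α) (le_self : ∀ α : M, α ≤ s α)
    (mul_self_le : ∀ α : M, s α * s α ≤ s α) (α : M) : 1 ⊔ s α * α ≤ s α :=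
  sup_le (one_le α) ((mul_le_mul_right (le_self α) (s α)).trans (mul_self_le α))

theorem saturation_is_least_fixed_point_general {M : Type*} [Monoid M] [SemilatticeSup M]
    [CovariantClass M M (· * ·) (· ≤ ·)] [CovariantClass M M (Function.swap (· * ·)) (· ≤ ·)]
    (s : M → M)
    (h1 : ∀ α : M, 1 ≤ s α)
    (h2 : ∀ α : M, α ≤ s α)
    (h3 : ∀ α : M, s α * s α ≤ s α)
    (h4 : ∀ α β : M, 1 ≤ β → α ≤ β → β * β ≤ β → s α ≤ β)
    (hsim₁ : ∀ f α β : M, f * α ≤ β * f → f * s α ≤ s β * f) :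
    ∀ α : M, s α = 1 ⊔ s α * α ∧ ∀ γ : M, γ = 1 ⊔ γ * α → s α ≤ γ := by
  intro α
  have hfix : 1 ⊔ s α * α ≤ s α := one_sup_saturation_mul_le h1 h2 h3 α
  have hleast : ∀ γ, 1 ≤ γ → γ * α ≤ γ → s α ≤ γ := fun γ =>
    saturation_le_of_one_le_of_mul_le h4 hsim₁
  refine ⟨le_antisymm (hleast _ le_sup_left ?_) hfix, fun γ hγ => hleast γ ?_ ?_⟩
  · calc (1 ⊔ s α * α) * α ≤ s α * α := mul_le_mul_left hfix α
      _ ≤ 1 ⊔ s α * α := le_sup_right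
  · exact le_sup_left.trans_eq hγ.symm
  · exact le_sup_right.trans_eq hγ.symm

/-- In an ordered monoid `M` with binary joins (multiplication monotone in each argument),
a saturation operator `s` which additionally satisfies the simulation laws
(`f·α ≤ β·f ⟹ f·α* ≤ β*·f` and `f·α ≥ β·f ⟹ f·α* ≥ β*·f`) produces, for each `α`,
the least fixed point of `x ↦ 1 ⊔ x·α`: we have `s α = 1 ⊔ s α * α`, and `s α ≤ γ`
for every fixed point `γ = 1 ⊔ γ * α`. -/
theorem saturation_is_least_fixed_point {M : Type*} [Monoid M] [SemilatticeSup M]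
    [CovariantClass M M (· * ·) (· ≤ ·)] [CovariantClass M M (Function.swap (· * ·)) (· ≤ ·)]
    (s : M → M)
    (h1 : ∀ α : M, 1 ≤ s α)
    (h2 : ∀ α : M, α ≤ s α)
    (h3 : ∀ α : M, s α * s α ≤ s α)
    (h4 : ∀ α β : M, 1 ≤ β → α ≤ β → β * β ≤ β → s α ≤ β)
    (hsim₁ : ∀ f α β : M, f * α ≤ β * f → f * s α ≤ s β * f)
    (hsim₂ : ∀ f α β : M, β * f ≤ f * α → s β * f ≤ f * s α) :
    ∀ α : M, s α = 1 ⊔ s α * α ∧ ∀ γ : M, γ = 1 ⊔ γ * α → s α ≤ γ :=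
  saturation_is_least_fixed_point_general s h1 h2 h3 h4 hsim₁
end

section
/- Let α : X → 𝒫(Σ_τ × X) be a labelled transition system with transitions x →^σ x' iff (σ,x') ∈ α(x), and define α^* : X → 𝒫(Σ_τ × X) by α^*(x) := {(σ,y) | σ ∈ Σ_τ, x ⟹^σ y}. Then, with respect to the LTS Kleisli composition · and the pointwise inclusion order: (i) e_X ≤ α^*; (ii) α ≤ α^*; (iii) α^*·α^* ≤ α^*; (iv) α^* ≤ β for every β : X → 𝒫(Σ_τ × X) with e_X ≤ β, α ≤ β and β·β ≤ β; and (v) for every function f : X → Y and every β : Y → 𝒫(Σ_τ × Y), writing f♯(x) := {(τ, f(x))}, if f♯·α ≤ β·f♯ then f♯·α^* ≤ β^*·f♯, and if f♯·α ≥ β·f♯ then f♯·α^* ≥ β^*·f♯. -/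
/-- The pointwise inclusion order on Kleisli maps. -/
def leK {A X Y : Type*} (f g : X → Set (Option A × Y)) : Prop := ∀ x, f x ⊆ g x

/-- `f♯(x) = {(τ, f x)}`. -/
def fsharp {A X Y : Type*} (f : X → Y) : X → Set (Option A × Y) :=
  fun x => {((none : Option A), f x)}

/-- Saturated transition `⟹^σ` of the LTS with transitions `x →^σ x'` iff `(σ,x') ∈ α x`. -/
def WTr {X A : Type*} (α : X → Set (Option A × X)) : Option A → X → X → Prop
  | none => Relation.ReflTransGen (fun x y => ((none : Option A), y) ∈ α x)
  | some a => fun x y => ∃ u v, Relation.ReflTransGen (fun x y => ((none : Option A), y) ∈ α x) x u ∧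
      (some a, v) ∈ α u ∧ Relation.ReflTransGen (fun x y => ((none : Option A), y) ∈ α x) v y

/-- The saturation `α*` of an LTS coalgebra: `α*(x) = {(σ,y) | x ⟹^σ y}`. -/
def sat {X A : Type*} (α : X → Set (Option A × X)) : X → Set (Option A × X) :=
  fun x => {p | WTr α p.1 x p.2}

/-!
Writing `→τ` for the silent steps of `α`, the saturation is `(→τ)^*` on silent labels and
`(→τ)^* ∘ →σ ∘ (→τ)^*` on visible ones, so reflexivity, the inclusion `α ≤ α*` and
transitivity are immediate, and any reflexive transitive `β ≥ α` absorbs such chains.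
Composing with `f♯` on either side only relabels states: `f♯·α ≤ β·f♯` says that `f` maps
`α`-steps to `β`-steps, and `β·f♯ ≤ f♯·α` that every `β`-step out of `f x` lifts to an
`α`-step out of `x`. Both properties pass from single steps to saturated ones, one step at a
time.
-/

section Saturation

variable {X Y A : Type*}

theorem Relation.ReflTransGen.exists_lift {r : X → X → Prop} {p : Y → Y → Prop} (f : X → Y)
    (hlift : ∀ x z, p (f x) z → ∃ y, r x y ∧ f y = z) {x : X} {z : Y}
    (h : Relation.ReflTransGen p (f x) z) : ∃ y, Relation.ReflTransGen r x y ∧ f y = z := by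
  induction h with
  | refl => exact ⟨x, .refl, rfl⟩
  | tail _ hstep ih =>
    obtain ⟨y, hxy, rfl⟩ := ih
    obtain ⟨y', hyy', rfl⟩ := hlift y _ hstep
    exact ⟨y', hxy.tail hyy', rfl⟩

namespace WTr

theorem refl (α : X → Set (Option A × X)) (x : X) : WTr α none x x :=
  Relation.ReflTransGen.refl

theorem of_mem {α : X → Set (Option A × X)} {σ : Option A} {x y : X} (h : (σ, y) ∈ α x) :
    WTr α σ x y := by
  cases σ with
  | none => exact .single h
  | some a => exact ⟨x, y, .refl, h, .refl⟩

theorem trans_none {α : X → Set (Option A × X)} {σ : Option A} {x y z : X}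
    (hxy : WTr α σ x y) (hyz : WTr α none y z) : WTr α σ x z := by
  cases σ with
  | none => exact Relation.ReflTransGen.trans hxy hyz
  | some a =>
    obtain ⟨u, v, hxu, huv, hvy⟩ := hxy
    exact ⟨u, v, hxu, huv, hvy.trans hyz⟩

theorem none_trans {α : X → Set (Option A × X)} {σ : Option A} {x y z : X}
    (hxy : WTr α none x y) (hyz : WTr α σ y z) : WTr α σ x z := by
  cases σ with
  | none => exact Relation.ReflTransGen.trans hxy hyz
  | some a =>
    obtain ⟨u, v, hyu, huv, hvz⟩ := hyz
    exact ⟨u, v, hxy.trans hyu, huv, hvz⟩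

theorem map {α : X → Set (Option A × X)} {β : Y → Set (Option A × Y)} (f : X → Y)
    (hmap : ∀ x σ y, (σ, y) ∈ α x → (σ, f y) ∈ β (f x)) {σ : Option A} {x y : X}
    (h : WTr α σ x y) : WTr β σ (f x) (f y) := by
  have hτ {x y} : WTr α none x y → WTr β none (f x) (f y) :=
    Relation.ReflTransGen.lift f (fun x y => hmap x none y) x y
  cases σ with
  | none => exact hτ h
  | some a =>
    obtain ⟨u, v, hxu, huv, hvy⟩ := h
    exact ⟨f u, f v, hτ hxu, hmap u _ v huv, hτ hvy⟩

theorem exists_lift {α : X → Set (Option A × X)} {β : Y → Set (Option A × Y)} (f : X → Y)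
    (hlift : ∀ x σ z, (σ, z) ∈ β (f x) → ∃ y, (σ, y) ∈ α x ∧ f y = z) {σ : Option A} {x : X}
    {z : Y} (h : WTr β σ (f x) z) : ∃ y, WTr α σ x y ∧ f y = z := by
  have hτ {x z} : WTr β none (f x) z → ∃ y, WTr α none x y ∧ f y = z :=
    Relation.ReflTransGen.exists_lift f (fun x z => hlift x none z)
  cases σ with
  | none => exact hτ h
  | some a =>
    obtain ⟨u, v, hxu, huv, hvz⟩ := h
    obtain ⟨y₁, hxy₁, rfl⟩ := hτ hxu
    obtain ⟨y₂, hy₁y₂, rfl⟩ := hlift y₁ _ v huv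
    obtain ⟨y₃, hy₂y₃, rfl⟩ := hτ hvz
    exact ⟨y₃, ⟨y₁, y₂, hxy₁, hy₁y₂, hy₂y₃⟩, rfl⟩

end WTr

theorem sat_mono {α β : X → Set (Option A × X)} (h : leK α β) : leK (sat α) (sat β) :=
  fun _ p hp => WTr.map id (fun x _ _ hxy => h x hxy) (σ := p.1) hp

theorem sat_leK_self {β : X → Set (Option A × X)} (hrefl : leK (kunit X) β)
    (htrans : leK (kcomp β β) β) : leK (sat β) β := by
  have hτ : ∀ x y, WTr β none x y → ((none : Option A), y) ∈ β x := by
    intro x y h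
    induction h with
    | refl => exact hrefl x rfl
    | tail _ hstep ih => exact htrans x ⟨_, .inl ⟨ih, hstep⟩⟩
  rintro x ⟨σ, z⟩ hxz
  cases σ with
  | none => exact hτ x z hxz
  | some a =>
    obtain ⟨u, v, hxu, huv, hvz⟩ := hxz
    have hxv : (some a, v) ∈ β x := htrans x ⟨u, .inr ⟨hτ x u hxu, huv⟩⟩
    exact htrans x ⟨v, .inl ⟨hxv, hτ v z hvz⟩⟩

theorem mem_kcomp_fsharp_left {α : X → Set (Option A × X)} {f : X → Y} {x : X} {σ : Option A}
    {z : Y} : (σ, z) ∈ kcomp (fsharp f) α x ↔ ∃ y, (σ, y) ∈ α x ∧ f y = z := by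
  constructor
  · rintro ⟨y, ⟨hxy, hz⟩ | ⟨hxy, hz⟩⟩ <;> cases hz <;> exact ⟨y, hxy, rfl⟩
  · rintro ⟨y, hxy, rfl⟩
    exact ⟨y, .inl ⟨hxy, rfl⟩⟩

theorem mem_kcomp_fsharp_right {β : Y → Set (Option A × Y)} {f : X → Y} {x : X}
    {σ : Option A} {z : Y} : (σ, z) ∈ kcomp β (fsharp f) x ↔ (σ, z) ∈ β (f x) := by
  constructor
  · rintro ⟨y, ⟨hy, hz⟩ | ⟨hy, hz⟩⟩ <;> cases hy <;> exact hz
  · exact fun hz => ⟨f x, .inr ⟨rfl, hz⟩⟩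

theorem leK_kcomp_fsharp_iff_map {α : X → Set (Option A × X)} {β : Y → Set (Option A × Y)}
    {f : X → Y} : leK (kcomp (fsharp f) α) (kcomp β (fsharp f)) ↔
      ∀ x σ y, (σ, y) ∈ α x → (σ, f y) ∈ β (f x) := by
  constructor
  · exact fun h x σ y hxy =>
      mem_kcomp_fsharp_right.mp (h x (mem_kcomp_fsharp_left.mpr ⟨y, hxy, rfl⟩))
  · rintro h x ⟨σ, z⟩ hxz
    obtain ⟨y, hxy, rfl⟩ := mem_kcomp_fsharp_left.mp hxz
    exact mem_kcomp_fsharp_right.mpr (h x σ y hxy)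

theorem leK_kcomp_fsharp_iff_lift {α : X → Set (Option A × X)} {β : Y → Set (Option A × Y)}
    {f : X → Y} : leK (kcomp β (fsharp f)) (kcomp (fsharp f) α) ↔
      ∀ x σ z, (σ, z) ∈ β (f x) → ∃ y, (σ, y) ∈ α x ∧ f y = z := by
  constructor
  · exact fun h x σ z hz =>
      mem_kcomp_fsharp_left.mp (h x (mem_kcomp_fsharp_right.mpr hz))
  · rintro h x ⟨σ, z⟩ hxz
    exact mem_kcomp_fsharp_left.mpr (h x σ z (mem_kcomp_fsharp_right.mp hxz))

end Saturation

/-- The saturation `α*` of an LTS coalgebra is the least reflexive, transitive Kleisli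
endomorphism above `α`, and it interacts with (op)lax homomorphisms `f♯`. -/
theorem lts_saturation_is_saturation {X A Y : Type*} (α : X → Set (Option A × X)) :
    leK (kunit X) (sat α) ∧
    leK α (sat α) ∧
    leK (kcomp (sat α) (sat α)) (sat α) ∧
    (∀ β : X → Set (Option A × X),
      leK (kunit X) β → leK α β → leK (kcomp β β) β → leK (sat α) β) ∧
    (∀ (f : X → Y) (β : Y → Set (Option A × Y)),
      (leK (kcomp (fsharp f) α) (kcomp β (fsharp f)) →
        leK (kcomp (fsharp f) (sat α)) (kcomp (sat β) (fsharp f))) ∧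
      (leK (kcomp β (fsharp f)) (kcomp (fsharp f) α) →
        leK (kcomp (sat β) (fsharp f)) (kcomp (fsharp f) (sat α)))) := by
  refine ⟨?_, fun x _ => WTr.of_mem, ?_, ?_, fun f β => ⟨?_, ?_⟩⟩
  · rintro x _ rfl
    exact WTr.refl α x
  · rintro x ⟨σ, z⟩ ⟨y, ⟨hxy, hyz⟩ | ⟨hxy, hyz⟩⟩
    · exact hxy.trans_none hyz
    · exact hxy.none_trans hyz
  · exact fun β hrefl hα htrans x => (sat_mono hα x).trans (sat_leK_self hrefl htrans x)
  · simp only [leK_kcomp_fsharp_iff_map]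
    exact fun hmap x σ y => WTr.map f hmap
  · simp only [leK_kcomp_fsharp_iff_lift]
    exact fun hlift x σ z => WTr.exists_lift f hlift
end

section
/- Let K be a category with binary coproducts and zero morphisms, and let G : K → K be an endofunctor. Then the endofunctor X ↦ G X ⨿ X carries a monad structure whose unit is the coprojection inr : X → G X ⨿ X and whose multiplication is the composite G(G X ⨿ X) ⨿ (G X ⨿ X) → G X ⨿ X given by first applying G([0, id_X]) ⨿ id (where [0, id_X] : G X ⨿ X → X is the cotuple of the zero morphism G X → X and the identity) and then the cotuple [inl, id] : G X ⨿ (G X ⨿ X) → G X ⨿ X; that is, these data satisfy the monad unit and associativity laws. -/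
open CategoryTheory CategoryTheory.Limits

/-- The object part of the endofunctor `X ↦ G X ⨿ X`. -/
noncomputable def Tobj {K : Type*} [Category K] [HasBinaryCoproducts K]
    (G : K ⥤ K) (X : K) : K :=
  G.obj X ⨿ X

/-- The morphism part of the endofunctor `X ↦ G X ⨿ X`. -/
noncomputable def Tmap {K : Type*} [Category K] [HasBinaryCoproducts K]
    (G : K ⥤ K) {X Y : K} (f : X ⟶ Y) : Tobj G X ⟶ Tobj G Y :=
  coprod.map (G.map f) f

/-- The unit: the coprojection `inr : X → G X ⨿ X`. -/
noncomputable def unitT {K : Type*} [Category K] [HasBinaryCoproducts K]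
    (G : K ⥤ K) (X : K) : X ⟶ Tobj G X :=
  coprod.inr

/-- The multiplication: `G(G X ⨿ X) ⨿ (G X ⨿ X) → G X ⨿ X`, given by first applying
`G([0, id_X]) ⨿ id` and then the cotuple `[inl, id]`. -/
noncomputable def multT {K : Type*} [Category K] [HasBinaryCoproducts K]
    [HasZeroMorphisms K] (G : K ⥤ K) (X : K) : Tobj G (Tobj G X) ⟶ Tobj G X :=
  coprod.map (G.map (coprod.desc 0 (𝟙 X))) (𝟙 (Tobj G X)) ≫
    coprod.desc coprod.inl (𝟙 (Tobj G X))

/-! Write `ε = projT = [0, id] : G X ⨿ X → X`. The multiplication is `[inl ∘ G ε, id]`, so after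
splitting along the coproduct every monad law reduces to the naturality of `ε` and to
`μ ≫ ε = ε ≫ ε`; the latter holds because both sides vanish on the `G`-summand, where `ε` is
zero. -/

section

variable {K : Type*} [Category K] [HasBinaryCoproducts K] (G : K ⥤ K)

-- `Tobj` is not reducible: with `coprod.inl` typed at `G.obj X ⨿ X`, the simp lemmas below
-- would not fire on composites with `Tmap` and `multT`.
noncomputable def inlT (X : K) : G.obj X ⟶ Tobj G X :=
  coprod.inl

@[ext]
theorem Tobj.hom_ext {X Y : K} {f g : Tobj G X ⟶ Y}
    (h₁ : inlT G X ≫ f = inlT G X ≫ g) (h₂ : unitT G X ≫ f = unitT G X ≫ g) : f = g :=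
  coprod.hom_ext h₁ h₂

@[simp]
theorem inlT_Tmap {X Y : K} (f : X ⟶ Y) : inlT G X ≫ Tmap G f = G.map f ≫ inlT G Y :=
  coprod.inl_map _ _

@[simp]
theorem inlT_Tmap_assoc {X Y Z : K} (f : X ⟶ Y) (h : Tobj G Y ⟶ Z) :
    inlT G X ≫ Tmap G f ≫ h = G.map f ≫ inlT G Y ≫ h :=
  coprod.inl_map_assoc _ _ _

@[simp]
theorem unitT_Tmap_assoc {X Y Z : K} (f : X ⟶ Y) (h : Tobj G Y ⟶ Z) :
    unitT G X ≫ Tmap G f ≫ h = f ≫ unitT G Y ≫ h :=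
  coprod.inr_map_assoc _ _ _

theorem unitT_naturality {X Y : K} (f : X ⟶ Y) : f ≫ unitT G Y = unitT G X ≫ Tmap G f :=
  (coprod.inr_map _ _).symm

variable [HasZeroMorphisms K]

noncomputable def projT (X : K) : Tobj G X ⟶ X :=
  coprod.desc 0 (𝟙 X)

@[simp]
theorem inlT_projT (X : K) : inlT G X ≫ projT G X = 0 :=
  coprod.inl_desc _ _

@[simp]
theorem inlT_projT_assoc {X Y : K} (h : X ⟶ Y) : inlT G X ≫ projT G X ≫ h = 0 := by
  rw [← Category.assoc, inlT_projT, zero_comp]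

@[simp]
theorem unitT_projT (X : K) : unitT G X ≫ projT G X = 𝟙 X :=
  coprod.inr_desc _ _

@[simp]
theorem unitT_projT_assoc {X Y : K} (h : X ⟶ Y) : unitT G X ≫ projT G X ≫ h = h := by
  rw [← Category.assoc, unitT_projT, Category.id_comp]

@[simp]
theorem inlT_multT (X : K) :
    inlT G (Tobj G X) ≫ multT G X = G.map (projT G X) ≫ inlT G X :=
  (coprod.inl_map_assoc _ _ _).trans (whisker_eq _ (coprod.inl_desc _ _))

@[simp]
theorem inlT_multT_assoc {X Y : K} (h : Tobj G X ⟶ Y) :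
    inlT G (Tobj G X) ≫ multT G X ≫ h = G.map (projT G X) ≫ inlT G X ≫ h := by
  rw [← Category.assoc, inlT_multT, Category.assoc]

@[simp]
theorem unitT_multT (X : K) : unitT G (Tobj G X) ≫ multT G X = 𝟙 (Tobj G X) :=
  (coprod.inr_map_assoc _ _ _).trans ((Category.id_comp _).trans (coprod.inr_desc _ _))

@[simp]
theorem unitT_multT_assoc {X Y : K} (h : Tobj G X ⟶ Y) :
    unitT G (Tobj G X) ≫ multT G X ≫ h = h := by
  rw [← Category.assoc, unitT_multT, Category.id_comp]

theorem Tmap_projT {X Y : K} (f : X ⟶ Y) : Tmap G f ≫ projT G Y = projT G X ≫ f := by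
  ext1 <;> simp

theorem multT_projT (X : K) :
    multT G X ≫ projT G X = projT G (Tobj G X) ≫ projT G X := by
  ext1 <;> simp

theorem multT_naturality {X Y : K} (f : X ⟶ Y) :
    Tmap G (Tmap G f) ≫ multT G Y = multT G X ≫ Tmap G f := by
  ext1
  · simp only [inlT_Tmap_assoc, inlT_multT_assoc, inlT_multT, inlT_Tmap]
    rw [← G.map_comp_assoc, ← G.map_comp_assoc, Tmap_projT]
  · simp

theorem Tmap_unitT_multT (X : K) : Tmap G (unitT G X) ≫ multT G X = 𝟙 (Tobj G X) := by
  ext1 <;> simp [← G.map_comp_assoc]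

theorem multT_assoc (X : K) :
    multT G (Tobj G X) ≫ multT G X = Tmap G (multT G X) ≫ multT G X := by
  ext1
  · simp only [inlT_Tmap_assoc, inlT_multT_assoc, inlT_multT]
    rw [← G.map_comp_assoc, ← G.map_comp_assoc, multT_projT]
  · simp

end

/-- In a category with binary coproducts and zero morphisms, the endofunctor
`X ↦ G X ⨿ X` together with `unitT` and `multT` satisfies naturality as well as the
monad unit and associativity laws. -/
theorem gplusid_is_monad {K : Type*} [Category K] [HasBinaryCoproducts K]
    [HasZeroMorphisms K] (G : K ⥤ K) :
    (∀ (X Y : K) (f : X ⟶ Y), f ≫ unitT G Y = unitT G X ≫ Tmap G f) ∧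
    (∀ (X Y : K) (f : X ⟶ Y), Tmap G (Tmap G f) ≫ multT G Y = multT G X ≫ Tmap G f) ∧
    (∀ X : K, unitT G (Tobj G X) ≫ multT G X = 𝟙 (Tobj G X)) ∧
    (∀ X : K, Tmap G (unitT G X) ≫ multT G X = 𝟙 (Tobj G X)) ∧
    (∀ X : K, multT G (Tobj G X) ≫ multT G X = Tmap G (multT G X) ≫ multT G X) :=
  ⟨fun _ _ => unitT_naturality G, fun _ _ => multT_naturality G, unitT_multT G,
    Tmap_unitT_multT G, multT_assoc G⟩
end

section
/- Composition in the Kleisli category of the convex-sets-of-multisets monad CM preserves non-empty joins in its second argument: let {f_i : X → Set(M Y)}_{i ∈ I} be a non-empty family of maps whose values f_i(x) are non-empty convex subsets of M Y, and let g : Y → Set(M Z) have non-empty convex values. Then for every x ∈ X, (g·(⋁_i f_i))(x) = convexHull(⋃_{i ∈ I} (g·f_i)(x)), where (⋁_i f_i)(x) := convexHull(⋃_{i ∈ I} f_i(x)). -/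
/-!
Extend `g` to the "linear" map `g♯ φ = ∑ φ(y) • g(y)` on `M Y`, so that `(g·f)(x)` is the union
of `g♯` over `f(x)`. When the values of `g` are non-empty and convex, `g♯` commutes with
non-negative scalars and sums: `(p + q) • g(y) = p • g(y) + q • g(y)` is exactly convexity, and
non-emptiness makes `0 • g(y) = {0}`, so coordinates outside the support are harmless. A set-valued
map preserving convex combinations sends the convex hull of `S` onto the convex hull of the image
of `S`, which is the claim with `S = ⋃ᵢ fᵢ(x)`.
-/

open scoped NNReal Pointwise

/-- `M Y`: finitely supported functions `Y →₀ ℝ≥0`. -/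
abbrev M (Y : Type*) : Type _ := Y →₀ ℝ≥0

/-- Kleisli composition of the monad `CM`:
`(g·f)(x) = ⋃_{φ ∈ f(x)} ∑_{y ∈ supp(φ)} φ(y) • g(y)`, where the finite sum of sets is the
Minkowski sum (the empty sum being `{0}`). -/
noncomputable def kcompCM {X Y Z : Type*} (g : Y → Set (M Z)) (f : X → Set (M Y)) :
    X → Set (M Z) :=
  fun x => ⋃ φ ∈ f x, ∑ y ∈ φ.support, φ y • g y

theorem Convex.add_smul_of_semifield {𝕜 E : Type*} [Semifield 𝕜] [LinearOrder 𝕜]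
    [IsStrictOrderedRing 𝕜] [AddCommMonoid E] [Module 𝕜 E] {s : Set E} (hs : Convex 𝕜 s)
    {p q : 𝕜} (hp : 0 ≤ p) (hq : 0 ≤ q) : (p + q) • s = p • s + q • s := by
  refine (Set.add_smul_subset _ _ _).antisymm ?_
  rintro _ ⟨_, ⟨u, hu, rfl⟩, _, ⟨v, hv, rfl⟩, rfl⟩
  obtain hpq | hpq := (add_nonneg hp hq).eq_or_lt
  · obtain ⟨rfl, rfl⟩ := (add_eq_zero_iff_of_nonneg hp hq).mp hpq.symm
    exact ⟨u, hu, by simp⟩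
  refine ⟨(p / (p + q)) • u + (q / (p + q)) • v,
    hs hu hv (by positivity) (by positivity) (by rw [← add_div, div_self hpq.ne']), ?_⟩
  dsimp only
  rw [smul_add, smul_smul, smul_smul, mul_div_cancel₀ _ hpq.ne', mul_div_cancel₀ _ hpq.ne']

theorem biUnion_convexHull_eq_convexHull_biUnion {𝕜 E F : Type*} [Semiring 𝕜] [PartialOrder 𝕜]
    [AddCommMonoid E] [Module 𝕜 E] [AddCommMonoid F] [Module 𝕜 F] (T : E → Set F)
    (hT : ∀ φ ψ (a b : 𝕜), 0 ≤ a → 0 ≤ b → a + b = 1 → T (a • φ + b • ψ) = a • T φ + b • T ψ)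
    (S : Set E) : ⋃ φ ∈ convexHull 𝕜 S, T φ = convexHull 𝕜 (⋃ φ ∈ S, T φ) := by
  refine (Set.iUnion₂_subset fun φ hφ => ?_).antisymm (convexHull_min ?_ ?_)
  · suffices convexHull 𝕜 S ⊆ {φ | T φ ⊆ convexHull 𝕜 (⋃ φ ∈ S, T φ)} from this hφ
    refine convexHull_min (fun φ hφ => (Set.subset_biUnion_of_mem hφ).trans
      (subset_convexHull 𝕜 _)) fun φ hφ ψ hψ a b ha hb hab => ?_
    rw [Set.mem_ofPred_eq, hT φ ψ a b ha hb hab]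
    exact (Set.add_subset_add (Set.smul_set_mono hφ) (Set.smul_set_mono hψ)).trans
      ((convex_convexHull 𝕜 _).set_combo_subset ha hb hab)
  · exact Set.biUnion_subset_biUnion_left (subset_convexHull 𝕜 S)
  · intro ξ hξ η hη a b ha hb hab
    obtain ⟨φ, hφ, hξ⟩ := Set.mem_iUnion₂.mp hξ
    obtain ⟨ψ, hψ, hη⟩ := Set.mem_iUnion₂.mp hη
    refine Set.mem_iUnion₂.mpr ⟨a • φ + b • ψ, convex_convexHull 𝕜 S hφ hψ ha hb hab, ?_⟩
    rw [hT φ ψ a b ha hb hab]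
    exact Set.add_mem_add (Set.smul_mem_smul_set hξ) (Set.smul_mem_smul_set hη)

section KleisliExtension

variable {Y Z : Type*} {g : Y → Set (M Z)}

noncomputable def kextCM (g : Y → Set (M Z)) (φ : M Y) : Set (M Z) :=
  ∑ y ∈ φ.support, φ y • g y

theorem kcompCM_eq_biUnion_kextCM {X : Type*} (f : X → Set (M Y)) (x : X) :
    kcompCM g f x = ⋃ φ ∈ f x, kextCM g φ :=
  rfl

theorem kextCM_eq_sum_of_support_subset (hg : ∀ y, (g y).Nonempty) {φ : M Y} {s : Finset Y}
    (hs : φ.support ⊆ s) : kextCM g φ = ∑ y ∈ s, φ y • g y :=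
  Finset.sum_subset hs fun y _ hy => by
    rw [Finsupp.notMem_support_iff.mp hy, Set.zero_smul_set (hg y)]

theorem kextCM_smul (hg : ∀ y, (g y).Nonempty) (a : ℝ≥0) (φ : M Y) :
    kextCM g (a • φ) = a • kextCM g φ := by
  classical
  rw [kextCM_eq_sum_of_support_subset hg Finsupp.support_smul, kextCM, Finset.smul_sum]
  simp only [Finsupp.smul_apply, smul_eq_mul, mul_smul]

theorem kextCM_add (hg : ∀ y, (g y).Nonempty ∧ Convex ℝ≥0 (g y)) (φ ψ : M Y) :
    kextCM g (φ + ψ) = kextCM g φ + kextCM g ψ := by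
  classical
  have hne y := (hg y).1
  rw [kextCM_eq_sum_of_support_subset hne Finsupp.support_add,
    kextCM_eq_sum_of_support_subset hne Finset.subset_union_left,
    kextCM_eq_sum_of_support_subset hne Finset.subset_union_right, ← Finset.sum_add_distrib]
  exact Finset.sum_congr rfl fun y _ => (hg y).2.add_smul_of_semifield zero_le zero_le

end KleisliExtension

theorem kcompCM_preserves_nonempty_joins_general {X Y Z ι : Type*}
    (f : ι → X → Set (M Y))
    (g : Y → Set (M Z))
    (hg : ∀ y, (g y).Nonempty ∧ Convex ℝ≥0 (g y)) :
    ∀ x, kcompCM g (fun x' => convexHull ℝ≥0 (⋃ i, f i x')) x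
        = convexHull ℝ≥0 (⋃ i, kcompCM g (f i) x) := by
  intro x
  have hconvex φ ψ (a b : ℝ≥0) (_ : 0 ≤ a) (_ : 0 ≤ b) (_ : a + b = 1) :
      kextCM g (a • φ + b • ψ) = a • kextCM g φ + b • kextCM g ψ := by
    rw [kextCM_add hg, kextCM_smul (fun y => (hg y).1), kextCM_smul (fun y => (hg y).1)]
  simp only [kcompCM_eq_biUnion_kextCM, ← Set.biUnion_iUnion]
  exact biUnion_convexHull_eq_convexHull_biUnion _ hconvex _

/-- Kleisli composition of the monad `CM` preserves non-empty joins in its second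
argument: `g·(⋁ᵢ fᵢ) = ⋁ᵢ (g·fᵢ)` pointwise, where `(⋁ᵢ fᵢ)(x) = conv(⋃ᵢ fᵢ(x))`. -/
theorem kcompCM_preserves_nonempty_joins {X Y Z ι : Type*} [Nonempty ι]
    (f : ι → X → Set (M Y))
    (hf : ∀ i x, (f i x).Nonempty ∧ Convex ℝ≥0 (f i x))
    (g : Y → Set (M Z))
    (hg : ∀ y, (g y).Nonempty ∧ Convex ℝ≥0 (g y)) :
    ∀ x, kcompCM g (fun x' => convexHull ℝ≥0 (⋃ i, f i x')) x
        = convexHull ℝ≥0 (⋃ i, kcompCM g (f i) x) :=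
  kcompCM_preserves_nonempty_joins_general f g hg
end

section
/- Let α : X → Set(Σ_τ × 𝒟X) be a finitary simple Segala system and let β be its derived CM-coalgebra on Σ_τ × X. If x ⇝^σ μ for σ ∈ Σ_τ, then (τ,x) ⇒_β ⟨σ,μ⟩. Moreover, if x ⇝^τ μ, then (σ,x) ⇒_β ⟨σ,μ⟩ for every σ ∈ Σ_τ. -/
open scoped NNReal Pointwise

/-- `𝒟 X`: finitely supported probability distributions on `X`. -/
def PDist (X : Type*) : Type _ := {μ : M X // μ.sum (fun _ r => r) = 1}

/-- The Dirac distribution `δ_x`. -/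
noncomputable def dirac {X : Type*} (x : X) : PDist X :=
  ⟨Finsupp.single x 1, by simp⟩

/-- `⟨σ,μ⟩ ∈ M(Σ_τ × X)`: the element with `⟨σ,μ⟩(σ',x') = μ(x')` if `σ' = σ` and `0`
otherwise. Labels: `none` is the silent label τ. -/
noncomputable def emb {X A : Type*} (σ : Option A) (μ : PDist X) : M (Option A × X) :=
  Finsupp.mapDomain (fun x => (σ, x)) μ.1

/-- The `CM`-structure `ᾱ` derived from a finitary simple Segala system `α`:
`ᾱ(x) = {p₁•⟨σ₁,μ₁⟩ + … + pₙ•⟨σₙ,μₙ⟩ | n ≥ 0, Σpᵢ ≤ 1, x →^{σᵢ} μᵢ}`. -/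
noncomputable def abar {X A : Type*} (α : X → Set (Option A × PDist X)) (x : X) :
    Set (M (Option A × X)) :=
  {ψ | ∃ (n : ℕ) (p : Fin n → ℝ≥0) (c : Fin n → Option A × PDist X),
    (∑ i, p i) ≤ 1 ∧ (∀ i, c i ∈ α x) ∧ ψ = ∑ i, p i • emb (c i).1 (c i).2}

/-- The derived coalgebra `β` on `Σ_τ × X`. -/
noncomputable def beta {X A : Type*} (α : X → Set (Option A × PDist X)) :
    Option A × X → Set (M (Option A × X))
  | (none, x) => abar α x
  | (some a, x) =>
    {ψ | (∀ (σ' : Option A) (x' : X), σ' ≠ some a → ψ (σ', x') = 0) ∧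
      ∃ φ : M (Option A × X), (∀ x' : X, φ (none, x') = 0) ∧
        Finsupp.mapDomain (fun s : Option A × X => ((none : Option A), s.2)) ψ + φ ∈ abar α x}

/-- The inductively defined relation `s ⇒ⁿ_β ψ` for a `CM`-coalgebra `β`. -/
inductive Steps {S : Type*} (β : S → Set (M S)) : ℕ → S → M S → Prop
  | zero (s : S) : Steps β 0 s (Finsupp.single s 1)
  | succ {n : ℕ} {s : S} (φ : M S) (hφ : φ ∈ β s) (ψ : S → M S)
      (hψ : ∀ t ∈ φ.support, Steps β n t (ψ t)) {ψ' : M S} (hψ' : Steps β n s ψ')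
      (p : ℝ≥0) (hp : p ≤ 1) :
      Steps β (n + 1) s (p • (∑ t ∈ φ.support, φ t • ψ t) + (1 - p) • ψ')

/-- The weak combined arrows `x ⇝ₙ^σ μ` of a finitary simple Segala system. -/
inductive WArrow {X A : Type*} (α : X → Set (Option A × PDist X)) :
    ℕ → Option A → X → PDist X → Prop
  | zero (x : X) : WArrow α 0 none x (dirac x)
  | succ {n : ℕ} {σ : Option A} {x : X} {μ : PDist X}
      (m : ℕ) (q : Fin m → ℝ≥0) (c : Fin m → Option A × PDist X)
      (hq : ∑ i, q i = 1) (hc : ∀ i, c i ∈ α x)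
      (ν : M (Option A × X)) (hν : ν = ∑ i, q i • emb (c i).1 (c i).2)
      (hlab : ∀ (σ' : Option A) (x' : X), σ' ≠ σ → σ' ≠ none → ν (σ', x') = 0)
      (κ : Option A × X → PDist X)
      (hκ₁ : ∀ s ∈ ν.support, s.1 = σ → WArrow α n none s.2 (κ s))
      (hκ₂ : ∀ s ∈ ν.support, s.1 = none → WArrow α n σ s.2 (κ s))
      (hμ : μ.1 = ∑ s ∈ ν.support, ν s • (κ s).1) :
      WArrow α (n + 1) σ x μ

/-!
Induction on the length of the weak arrow, proving both claims simultaneously. The combined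
step `ν` of `x ⇝ₙ₊₁^σ μ` is an element of `ᾱ(x) = β(τ,x)` and `⟨σ,μ⟩` is the `ν`-weighted mix of
the `⟨σ,κ_s⟩`, so `(τ,x)` reaches `⟨σ,μ⟩` by one `β`-step followed by the runs given by
induction: from `(σ,x')` by the second claim, from `(τ,x')` by the first. For a `τ`-arrow, `ν`
carries only the label `τ`, and relabelling it to `σ` gives an element of `β(σ,x)`, after which
the second claim applies to every successor `(σ,x')`.
-/

namespace Steps

variable {S : Type*} {β : S → Set (M S)}

theorem mono (h0 : ∀ s, (0 : M S) ∈ β s) {n m : ℕ} {s : S} {ψ : M S} (hnm : n ≤ m)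
    (h : Steps β n s ψ) : Steps β m s ψ := by
  induction hnm with
  | refl => exact h
  -- a step taken with probability `0` pads a run; `0 ∈ β s` supplies one
  | step _ ih => simpa using Steps.succ 0 (h0 s) (fun _ => 0) (by simp) ih 0 zero_le_one

theorem exists_sum_of_mem (h0 : ∀ s, (0 : M S) ∈ β s) {s : S} {φ : M S} (hφ : φ ∈ β s)
    {ψ : S → M S} (h : ∀ t ∈ φ.support, ∃ n, Steps β n t (ψ t)) :
    ∃ n, Steps β n s (∑ t ∈ φ.support, φ t • ψ t) := by
  classical
  choose! N hN using h
  set n := φ.support.sup N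
  have hψ : ∀ t ∈ φ.support, Steps β n t (ψ t) :=
    fun t ht => mono h0 (Finset.le_sup ht) (hN t ht)
  have hs : Steps β n s (Finsupp.single s 1) := mono h0 n.zero_le (Steps.zero s)
  exact ⟨n + 1, by simpa using Steps.succ φ hφ ψ hψ hs 1 le_rfl⟩

end Steps

section Segala

variable {X A : Type*} (α : X → Set (Option A × PDist X))

theorem zero_mem_abar (x : X) : (0 : M (Option A × X)) ∈ abar α x :=
  ⟨0, Fin.elim0, Fin.elim0, by simp, fun i => i.elim0, by simp⟩

theorem zero_mem_beta (s : Option A × X) : (0 : M (Option A × X)) ∈ beta α s := by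
  obtain ⟨_ | a, x⟩ := s
  · exact zero_mem_abar α x
  · exact ⟨fun _ _ _ => rfl, 0, fun _ => rfl, by simpa using zero_mem_abar α x⟩

variable {α}

theorem emb_dirac (σ : Option A) (x : X) : emb σ (dirac x) = Finsupp.single (σ, x) 1 := by
  simp [emb, dirac]

theorem emb_eq_sum {σ : Option A} {μ : PDist X} {T : Finset (Option A × X)}
    {w : Option A × X → ℝ≥0} {κ : Option A × X → PDist X}
    (hμ : μ.1 = ∑ s ∈ T, w s • (κ s).1) :
    emb σ μ = ∑ s ∈ T, w s • emb σ (κ s) := by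
  simp only [emb, hμ, Finsupp.mapDomain_finsetSum, Finsupp.mapDomain_smul]

theorem mapDomain_none_snd_of_silent {ν : M (Option A × X)}
    (hτ : ∀ s ∈ ν.support, s.1 = none) :
    ν.mapDomain (fun s => ((none : Option A), s.2)) = ν :=
  (Finsupp.mapDomain_congr (f := fun s => ((none : Option A), s.2)) (g := id)
    fun s hs => Prod.ext (hτ s hs).symm rfl).trans Finsupp.mapDomain_id

theorem relabel_mem_beta {x : X} {ν : M (Option A × X)} (hν : ν ∈ abar α x)
    (hτ : ∀ s ∈ ν.support, s.1 = none) (σ : Option A) :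
    ν.mapDomain (fun s => (σ, s.2)) ∈ beta α (σ, x) := by
  cases σ with
  | none => rwa [mapDomain_none_snd_of_silent hτ]
  | some a =>
    refine ⟨fun σ' x' hσ' => Finsupp.mapDomain_of_notMem_range _ _ ?_, 0, fun _ => rfl, ?_⟩
    · rintro ⟨s, hs⟩
      exact hσ' (congrArg Prod.fst hs).symm
    · rwa [add_zero, ← Finsupp.mapDomain_comp, Function.comp_def,
        mapDomain_none_snd_of_silent hτ]

theorem exists_steps_relabel {x : X} {ν : M (Option A × X)} (hν : ν ∈ abar α x)
    (hτ : ∀ s ∈ ν.support, s.1 = none) (σ : Option A) {κ : Option A × X → PDist X}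
    (h : ∀ s ∈ ν.support, ∃ n, Steps (beta α) n (σ, s.2) (emb σ (κ s))) :
    ∃ n, Steps (beta α) n (σ, x) (∑ s ∈ ν.support, ν s • emb σ (κ s)) := by
  classical
  let φ := ν.mapDomain (fun s => (σ, s.2))
  have hsum : (φ.sum fun t r => r • emb σ (κ (none, t.2))) =
      ν.sum fun s r => r • emb σ (κ (none, s.2)) :=
    Finsupp.sum_mapDomain_index (fun _ => zero_smul _ _) (fun _ _ _ => add_smul _ _ _)
  have hsilent : (ν.sum fun s r => r • emb σ (κ (none, s.2))) =
      ν.sum fun s r => r • emb σ (κ s) :=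
    Finset.sum_congr rfl fun s hs => by rw [← hτ s hs]
  change ∃ n, Steps (beta α) n (σ, x) (ν.sum fun s r => r • emb σ (κ s))
  rw [← hsilent, ← hsum]
  refine Steps.exists_sum_of_mem (zero_mem_beta α) (relabel_mem_beta hν hτ σ) fun t ht => ?_
  obtain ⟨s, hs, rfl⟩ := Finset.mem_image.mp (Finsupp.mapDomain_support ht)
  simpa only [← hτ s hs] using h s hs

theorem exists_steps_of_warrow (n : ℕ) :
    (∀ (σ : Option A) (x : X) (μ : PDist X), WArrow α n σ x μ →
      ∃ m, Steps (beta α) m ((none : Option A), x) (emb σ μ)) ∧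
    (∀ (x : X) (μ : PDist X), WArrow α n (none : Option A) x μ →
      ∀ σ : Option A, ∃ m, Steps (beta α) m (σ, x) (emb σ μ)) := by
  induction n with
  | zero =>
    refine ⟨?_, ?_⟩
    · rintro σ x μ ⟨⟩
      exact ⟨0, by simpa [emb_dirac] using Steps.zero _⟩
    · rintro x μ ⟨⟩ σ
      exact ⟨0, by simpa [emb_dirac] using Steps.zero _⟩
  | succ n ih =>
    refine ⟨?_, ?_⟩
    · intro σ x μ h
      cases h with | succ m q c hq hc ν hν hlab κ hκ₁ hκ₂ hμ
      rw [emb_eq_sum hμ]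
      refine Steps.exists_sum_of_mem (s := (none, x)) (zero_mem_beta α)
        ⟨m, q, c, hq.le, hc, hν⟩ ?_
      rintro ⟨σ', x'⟩ hs
      by_cases hσ' : σ' = σ
      · subst hσ'
        exact ih.2 _ _ (hκ₁ _ hs rfl) _
      · obtain rfl : σ' = none := by
          by_contra hτ
          exact Finsupp.mem_support_iff.mp hs (hlab σ' x' hσ' hτ)
        exact ih.1 _ _ _ (hκ₂ _ hs rfl)
    · intro x μ h σ
      cases h with | succ m q c hq hc ν hν hlab κ hκ₁ _ hμ
      have hτ : ∀ s ∈ ν.support, s.1 = none := fun s hs => by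
        by_contra hτ
        exact Finsupp.mem_support_iff.mp hs (hlab s.1 s.2 hτ hτ)
      rw [emb_eq_sum hμ]
      exact exists_steps_relabel ⟨m, q, c, hq.le, hc, hν⟩ hτ σ
        fun s hs => ih.2 _ _ (hκ₁ s hs (hτ s hs)) σ

end Segala

/-- If `x ⇝^σ μ` then `(τ,x) ⇒_β ⟨σ,μ⟩`; moreover if `x ⇝^τ μ` then `(σ,x) ⇒_β ⟨σ,μ⟩`
for every `σ ∈ Σ_τ`. -/
theorem warrow_implies_steps {X A : Type*} (α : X → Set (Option A × PDist X)) :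
    (∀ (σ : Option A) (x : X) (μ : PDist X),
      (∃ n, WArrow α n σ x μ) → ∃ n, Steps (beta α) n ((none : Option A), x) (emb σ μ)) ∧
    (∀ (x : X) (μ : PDist X), (∃ n, WArrow α n (none : Option A) x μ) →
      ∀ σ : Option A, ∃ n, Steps (beta α) n (σ, x) (emb σ μ)) :=
  ⟨fun σ x μ ⟨n, h⟩ => (exists_steps_of_warrow n).1 σ x μ h,
    fun x μ ⟨n, h⟩ => (exists_steps_of_warrow n).2 x μ h⟩
end
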